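/- arXiv:1208.6398 — 3 statements merged into one kernel-verified Lean document; each statement's English description precedes it below -/
import Mathlib

section
/- Let n ∈ ℕ, let Ω ⊆ ℝⁿ be a compact set, let λ be a finite Borel measure supported on Ω, and let u ∈ L²(Ω,λ) with u ≥ 0 λ-almost everywhere. Then for every ε > 0 there exists a polynomial w with w(x) ≥ 0 for all x ∈ Ω (indeed w can be taken strictly positive on Ω) such that ‖u − w‖_{L²(Ω,λ)} < ε. In other words, the cone P(Ω) of polynomials nonnegative on Ω is dense in the cone of nonnegative elements of L²(Ω,λ) with respect to the L²-norm. -/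
/-!
Approximate `u` in `L²(Ω, μ)` by a bounded continuous `g`; since `u ≥ 0`, passing to
`g⁺ = max g 0` does not increase the error. By Stone–Weierstrass on the compact set `Ω`,
some polynomial lies strictly between `g⁺ ≥ 0` and `g⁺ + δ` on `Ω`, so it is positive there,
and on a finite measure a uniform error `δ` gives an `L²` error at most `μ(Ω)^{1/2} δ`.
-/

open MeasureTheory Matrix Finset

noncomputable section

/-- The set of multi-indices `α : Fin n → ℕ` with `|α| = ∑ i, α i ≤ d`, as a `Finset`. -/
def multiIdx (n d : ℕ) : Finset (Fin n → ℕ) :=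
  (Fintype.piFinset fun _ : Fin n => Finset.range (d + 1)).filter fun α => ∑ i, α i ≤ d

/-- The monomial `x^α = ∏ i, x i ^ α i`. -/
def mono {n : ℕ} (α : Fin n → ℕ) (x : Fin n → ℝ) : ℝ := ∏ i, x i ^ α i

theorem mem_multiIdx {n d : ℕ} {α : Fin n → ℕ} : α ∈ multiIdx n d ↔ ∑ i, α i ≤ d := by
  refine ⟨fun h => (Finset.mem_filter.mp h).2, fun h => Finset.mem_filter.mpr ⟨?_, h⟩⟩
  exact Fintype.mem_piFinset.mpr fun i =>
    Finset.mem_range_succ_iff.mpr ((Finset.single_le_sum (by simp) (Finset.mem_univ i)).trans h)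

theorem MvPolynomial.exists_sum_multiIdx_mono_eq_eval {n : ℕ} (p : MvPolynomial (Fin n) ℝ) :
    ∃ (N : ℕ) (c : ↥(multiIdx n N) → ℝ),
      ∀ x, ∑ α : ↥(multiIdx n N), c α * mono (↑α) x = eval x p := by
  classical
  let e : (Fin n →₀ ℕ) ≃ (Fin n → ℕ) := Finsupp.equivFunOnFinite
  refine ⟨p.totalDegree, fun α => p.coeff (e.symm α), fun x => ?_⟩
  have hsub : p.support.map e.toEmbedding ⊆ multiIdx n p.totalDegree := by
    intro α hα
    obtain ⟨d, hd, rfl⟩ := Finset.mem_map.mp hα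
    simpa [mem_multiIdx, e, Finsupp.sum_fintype] using le_totalDegree hd
  rw [Finset.sum_coe_sort (multiIdx n _) (fun α => p.coeff (e.symm α) * mono α x), eval_eq',
    ← Finset.sum_subset hsub, Finset.sum_map]
  · simp [e, mono]
  · intro α _ hα
    simp_all [e]

namespace MvPolynomial

variable {σ : Type*}

theorem aeval_restrict_eval_apply {K : Set (σ → ℝ)} (p : MvPolynomial σ ℝ) (y : K) :
    aeval (fun i => (ContinuousMap.eval i).restrict K) p y = eval (y : σ → ℝ) p := by
  induction p using MvPolynomial.induction_on with
  | C a => simp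
  | add p q hp hq => simp [hp, hq]
  | mul_X p i hp => simp [hp]

theorem exists_forall_abs_eval_sub_lt {K : Set (σ → ℝ)} (hK : IsCompact K)
    {f : (σ → ℝ) → ℝ} (hf : ContinuousOn f K) {δ : ℝ} (hδ : 0 < δ) :
    ∃ p : MvPolynomial σ ℝ, ∀ x ∈ K, |eval x p - f x| < δ := by
  have : CompactSpace K := isCompact_iff_compactSpace.mp hK
  set coords : σ → C(K, ℝ) := fun i => (ContinuousMap.eval i).restrict K
  have hsep : (aeval (R := ℝ) coords).range.SeparatesPoints := by
    intro x y hxy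
    obtain ⟨i, hi⟩ : ∃ i, (x : σ → ℝ) i ≠ (y : σ → ℝ) i := by
      by_contra! h
      exact hxy (Subtype.ext (_root_.funext h))
    exact ⟨coords i, ⟨coords i, ⟨X i, aeval_X _ _⟩, rfl⟩, hi⟩
  obtain ⟨⟨_, p, rfl⟩, hp⟩ :=
    ContinuousMap.exists_mem_subalgebra_near_continuous_of_separatesPoints _ hsep
      (K.domRestrict f) hf.domRestrict δ hδ
  refine ⟨p, fun x hx => ?_⟩
  simpa [coords, aeval_restrict_eval_apply] using hp ⟨x, hx⟩

theorem exists_forall_lt_eval_lt_add {K : Set (σ → ℝ)} (hK : IsCompact K)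
    {f : (σ → ℝ) → ℝ} (hf : ContinuousOn f K) {δ : ℝ} (hδ : 0 < δ) :
    ∃ p : MvPolynomial σ ℝ, ∀ x ∈ K, f x < eval x p ∧ eval x p < f x + δ := by
  obtain ⟨p, hp⟩ := exists_forall_abs_eval_sub_lt hK hf (half_pos hδ)
  refine ⟨p + C (δ / 2), fun x hx => ?_⟩
  have := abs_lt.mp (hp x hx)
  simp only [eval_add, eval_C]
  constructor <;> linarith

end MvPolynomial

section LpApprox

open scoped ENNReal Topology

variable {α E : Type*} [MeasurableSpace α] {μ : Measure α} [NormedAddCommGroup E] {p : ℝ≥0∞}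

theorem eLpNorm_sub_max_zero_le {u g : α → ℝ} (hu : 0 ≤ᵐ[μ] u) :
    eLpNorm (fun x => u x - max (g x) 0) p μ ≤ eLpNorm (fun x => u x - g x) p μ := by
  refine eLpNorm_mono_ae ?_
  filter_upwards [hu] with x (hx : 0 ≤ u x)
  simpa only [max_eq_left hx, Real.norm_eq_abs] using abs_max_sub_max_le_abs (u x) (g x) 0

theorem exists_pos_forall_eLpNorm_lt [IsFiniteMeasure μ] {η : ℝ≥0∞} (hη : 0 < η) :
    ∃ δ > 0, ∀ f : α → E, (∀ᵐ x ∂μ, ‖f x‖ ≤ δ) → eLpNorm f p μ < η := by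
  have hlim : Filter.Tendsto (fun δ : ℝ => μ Set.univ ^ p.toReal⁻¹ * ENNReal.ofReal δ) (𝓝 0)
      (𝓝 0) := by
    simpa using ENNReal.Tendsto.const_mul
      (ENNReal.tendsto_ofReal (Filter.tendsto_id (x := 𝓝 (0 : ℝ))))
      (Or.inr (ENNReal.rpow_ne_top_of_nonneg (by positivity) (measure_ne_top μ _)))
  obtain ⟨δ, hδη, hδ⟩ := ((hlim.eventually (gt_mem_nhds hη)).filter_mono nhdsWithin_le_nhds
    |>.and (self_mem_nhdsWithin (s := Set.Ioi 0))).exists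
  exact ⟨δ, hδ, fun f hf => (eLpNorm_le_of_ae_bound hf).trans_lt hδη⟩

end LpApprox

theorem stmt5_general (n : ℕ) (Ω : Set (Fin n → ℝ)) (hΩ : IsCompact Ω)
    (μ : Measure (Fin n → ℝ)) [IsFiniteMeasure μ]
    (u : (Fin n → ℝ) → ℝ) (hu : MemLp u 2 (μ.restrict Ω))
    (hupos : ∀ᵐ x ∂(μ.restrict Ω), 0 ≤ u x)
    (ε : ℝ) (hε : 0 < ε) :
    ∃ (N : ℕ) (c : ↥(multiIdx n N) → ℝ),
      (∀ x ∈ Ω, 0 < ∑ α : ↥(multiIdx n N), c α * mono (↑α) x) ∧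
      eLpNorm (fun x => u x - ∑ α : ↥(multiIdx n N), c α * mono (↑α) x) 2 (μ.restrict Ω)
        < ENNReal.ofReal ε := by
  have hε2 : 0 < ENNReal.ofReal ε / 2 := by simpa using hε
  obtain ⟨g, hug, -⟩ := hu.exists_boundedContinuous_eLpNorm_sub_le ENNReal.ofNat_ne_top hε2.ne'
  set g₀ : (Fin n → ℝ) → ℝ := fun x => max (g x) 0
  have hg₀_cont : Continuous g₀ := g.continuous.max continuous_const
  have hug₀ : eLpNorm (u - g₀) 2 (μ.restrict Ω) ≤ ENNReal.ofReal ε / 2 :=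
    (eLpNorm_sub_max_zero_le hupos).trans hug
  obtain ⟨δ, hδ, hδ_eLpNorm⟩ :=
    exists_pos_forall_eLpNorm_lt (μ := μ.restrict Ω) (E := ℝ) (p := 2) hε2
  obtain ⟨P, hP⟩ := MvPolynomial.exists_forall_lt_eval_lt_add hΩ hg₀_cont.continuousOn hδ
  set q : (Fin n → ℝ) → ℝ := fun x => MvPolynomial.eval x P
  have hgq : ∀ᵐ x ∂μ.restrict Ω, ‖(g₀ - q) x‖ ≤ δ := by
    refine ae_restrict_of_forall_mem hΩ.measurableSet fun x hx => ?_
    rw [Pi.sub_apply, Real.norm_eq_abs, abs_sub_comm, abs_le]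
    constructor <;> linarith [hP x hx]
  obtain ⟨N, c, hc⟩ := P.exists_sum_multiIdx_mono_eq_eval
  refine ⟨N, c, fun x hx => hc x ▸ (le_max_right _ _).trans_lt (hP x hx).1, ?_⟩
  simp_rw [hc]
  calc eLpNorm (u - q) 2 (μ.restrict Ω)
      = eLpNorm ((u - g₀) + (g₀ - q)) 2 (μ.restrict Ω) := by rw [sub_add_sub_cancel]
    _ ≤ eLpNorm (u - g₀) 2 (μ.restrict Ω) + eLpNorm (g₀ - q) 2 (μ.restrict Ω) :=
        eLpNorm_add_le (hu.aestronglyMeasurable.sub hg₀_cont.aestronglyMeasurable)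
          (hg₀_cont.aestronglyMeasurable.sub P.continuous_eval.aestronglyMeasurable) one_le_two
    _ < ENNReal.ofReal ε / 2 + ENNReal.ofReal ε / 2 :=
        ENNReal.add_lt_add_of_le_of_lt (ne_top_of_le_ne_top (by finiteness) hug₀) hug₀
          (hδ_eLpNorm _ hgq)
    _ = ENNReal.ofReal ε := ENNReal.add_halves _

/-- polynomials nonnegative (indeed strictly positive) on the compact set
`Ω` are dense, for the `L²(Ω,λ)`-norm, in the cone of nonnegative elements of
`L²(Ω,λ)`: for every `ε > 0` there is a polynomial `w` (of some degree `N`) with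
`w > 0` on `Ω` and `‖u - w‖_{L²(Ω,λ)} < ε`. -/
theorem stmt5 (n : ℕ) (Ω : Set (Fin n → ℝ)) (hΩ : IsCompact Ω)
    (μ : Measure (Fin n → ℝ)) [IsFiniteMeasure μ] (hsupp : μ Ωᶜ = 0)
    (u : (Fin n → ℝ) → ℝ) (hu : MemLp u 2 (μ.restrict Ω))
    (hupos : ∀ᵐ x ∂(μ.restrict Ω), 0 ≤ u x)
    (ε : ℝ) (hε : 0 < ε) :
    ∃ (N : ℕ) (c : ↥(multiIdx n N) → ℝ),
      (∀ x ∈ Ω, 0 < ∑ α : ↥(multiIdx n N), c α * mono (↑α) x) ∧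
      eLpNorm (fun x => u x - ∑ α : ↥(multiIdx n N), c α * mono (↑α) x) 2 (μ.restrict Ω)
        < ENNReal.ofReal ε :=
  stmt5_general n Ω hΩ μ u hu hupos ε hε
end
end

section
/- Let n, d ∈ ℕ, let Ω ⊆ ℝⁿ be compact with nonempty interior, let λ be a finite Borel measure supported on Ω with λ(O) > 0 for some open set O ⊆ Ω, and let u ∈ L²(Ω,λ). Let F_d be the set of polynomials p of degree at most d such that the localizing matrix M_d(p z), indexed by multi-indices α, β with |α|,|β| ≤ d and with entries ∫_Ω p(x) x^{α+β} dλ(x), is positive semidefinite. Then the minimization of ∫_Ω (u − p)² dλ over p ∈ F_d attains its infimum, i.e., there exists u*_d ∈ F_d with ∫_Ω (u − u*_d)² dλ ≤ ∫_Ω (u − p)² dλ for all p ∈ F_d. -/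
open MeasureTheory Matrix Finset

noncomputable section

/-- The polynomial of degree at most `d` with coefficient vector `c`. -/
def poly {n : ℕ} (d : ℕ) (c : ↥(multiIdx n d) → ℝ) (x : Fin n → ℝ) : ℝ :=
  ∑ α : ↥(multiIdx n d), c α * mono (↑α) x

/-- The localizing matrix `M_d(p z)` of a function `p` w.r.t. the measure `μ` on `Ω`:
its `(α,β)` entry is `∫_Ω p(x) x^{α+β} dλ(x)`. -/
def locMat {n : ℕ} (d : ℕ) (Ω : Set (Fin n → ℝ)) (μ : Measure (Fin n → ℝ))
    (p : (Fin n → ℝ) → ℝ) : Matrix ↥(multiIdx n d) ↥(multiIdx n d) ℝ :=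
  Matrix.of fun α β : ↥(multiIdx n d) => ∫ x in Ω, p x * mono (↑α + ↑β) x ∂μ

/-!
The objective and the localizing matrix of `poly d c` depend on `c` only through the class
`T c` of `poly d c` in `L²(μ|Ω)`: the objective is `‖u - T c‖²` and the entries of the localizing
matrix are inner products of `T c` with monomials. Hence the feasible set is the preimage under
the linear map `T` of a closed set. `T` need not be injective (a polynomial may vanish `μ`-a.e.),
but it is injective, hence antilipschitz, on a complement of its kernel, and restricting to that
complement loses no values of `T`. There the distance to `u` is coercive, so its minimum over the
closed feasible set is attained.
-/

open Filter

theorem Matrix.isClosed_setOf_posSemidef {ι R : Type*} [Fintype ι] [CommRing R] [PartialOrder R]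
    [StarRing R] [TopologicalSpace R] [IsTopologicalRing R] [ContinuousStar R]
    [OrderClosedTopology R] [T2Space R] :
    IsClosed {M : Matrix ι ι R | M.PosSemidef} := by
  simp only [posSemidef_iff_dotProduct_mulVec, Set.ofPred_and, Set.ofPred_forall]
  exact (isClosed_eq continuous_id.matrix_conjTranspose continuous_id).inter
    (isClosed_iInter fun v => isClosed_le continuous_const
      (continuous_const.dotProduct (continuous_id.matrix_mulVec continuous_const)))

section NormSubMinimization

variable {E F : Type*} [NormedAddCommGroup E] [NormedSpace ℝ E] [FiniteDimensional ℝ E]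
  [NormedAddCommGroup F] [NormedSpace ℝ F]

theorem LinearMap.exists_isMinOn_norm_sub_of_injective (T : E →ₗ[ℝ] F)
    (hT : Function.Injective T) {S : Set E} (hS : IsClosed S) (hne : S.Nonempty) (y : F) :
    ∃ s₀ ∈ S, IsMinOn (fun s => ‖y - T s‖) S s₀ := by
  obtain ⟨s₁, hs₁⟩ := hne
  obtain ⟨K, hK, hTK⟩ := T.injective_iff_antilipschitz.mp hT
  have hK' : (0 : ℝ) < K := NNReal.coe_pos.mpr hK
  have hcoercive : Tendsto (fun s => ‖y - T s‖) (cocompact E) atTop := by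
    refine tendsto_atTop_mono (fun s => ?_) (tendsto_atTop_add_const_right _ (-‖y‖)
      (tendsto_norm_cocompact_atTop.atTop_div_const hK'))
    have hs : ‖s‖ / K ≤ ‖T s‖ := (div_le_iff₀' hK').mpr (by simpa using hTK.le_mul_dist s 0)
    have hy : ‖T s‖ ≤ ‖y‖ + ‖y - T s‖ := by simpa using norm_sub_le y (y - T s)
    linarith
  exact (continuous_const.sub T.continuous_of_finiteDimensional).norm.continuousOn.exists_isMinOn'
    hS hs₁ ((hcoercive.eventually_ge_atTop _).filter_mono inf_le_left)

theorem LinearMap.exists_isMinOn_norm_sub_of_isClosed_preimage (T : E →ₗ[ℝ] F) {P : Set F}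
    (hP : IsClosed (T ⁻¹' P)) (hne : (T ⁻¹' P).Nonempty) (y : F) :
    ∃ s₀ ∈ T ⁻¹' P, IsMinOn (fun s => ‖y - T s‖) (T ⁻¹' P) s₀ := by
  obtain ⟨C, hC⟩ := (LinearMap.ker T).exists_isCompl
  have hvalues : ∀ s, ∃ c : C, T c = T s := by
    intro s
    obtain ⟨k, hk, c, hc, rfl⟩ :=
      Submodule.mem_sup.mp (hC.sup_eq_top ▸ Submodule.mem_top (x := s))
    exact ⟨⟨c, hc⟩, by simp [LinearMap.mem_ker.mp hk]⟩
  have hinj : Function.Injective (T ∘ₗ C.subtype) := by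
    rw [← LinearMap.ker_eq_bot, LinearMap.ker_comp, ← Submodule.disjoint_iff_comap_eq_bot]
    exact hC.disjoint.symm
  obtain ⟨s₁, hs₁⟩ := hne
  obtain ⟨c₁, hc₁⟩ := hvalues s₁
  obtain ⟨c₀, hc₀, hmin⟩ := (T ∘ₗ C.subtype).exists_isMinOn_norm_sub_of_injective hinj
    (S := (T ∘ₗ C.subtype) ⁻¹' P) (hP.preimage continuous_subtype_val)
    ⟨c₁, show T c₁ ∈ P from hc₁ ▸ hs₁⟩ y
  refine ⟨c₀, hc₀, fun s hs => ?_⟩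
  obtain ⟨c, hc⟩ := hvalues s
  simpa [hc] using hmin (show T c ∈ P from hc ▸ hs)

end NormSubMinimization

theorem MeasureTheory.Lp.coeFn_finset_sum {α E ι : Type*} [MeasurableSpace α] {μ : Measure α}
    [NormedAddCommGroup E] {p : ENNReal} (s : Finset ι) (f : ι → Lp E p μ) :
    ⇑(∑ i ∈ s, f i) =ᵐ[μ] ∑ i ∈ s, ⇑(f i) := by
  classical
  induction s using Finset.induction_on with
  | empty => simpa using Lp.coeFn_zero E p μ
  | insert i s hi ih =>
    simp only [Finset.sum_insert hi]
    exact (Lp.coeFn_add _ _).trans ((EventuallyEq.refl _ _).add ih)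

theorem MeasureTheory.L2.real_inner_eq_integral_of_ae_eq {α : Type*} [MeasurableSpace α]
    {μ : Measure α} {f g : Lp ℝ 2 μ} {f' g' : α → ℝ} (hf : f =ᵐ[μ] f') (hg : g =ᵐ[μ] g') :
    inner ℝ f g = ∫ x, f' x * g' x ∂μ := by
  rw [L2.inner_def]
  refine integral_congr_ae ?_
  filter_upwards [hf, hg] with x hfx hgx
  simp [hfx, hgx, mul_comm]

section PolynomialsInL2

variable {n : ℕ} {Ω : Set (Fin n → ℝ)} (μ : Measure (Fin n → ℝ)) [IsFiniteMeasure μ]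

theorem memLp_mono (hΩ : IsCompact Ω) (α : Fin n → ℕ) : MemLp (mono α) 2 (μ.restrict Ω) := by
  have hcont : Continuous (mono α) :=
    continuous_finsetProd _ fun i _ => (continuous_apply i).pow _
  obtain ⟨C, hC⟩ := hΩ.exists_bound_of_continuousOn hcont.continuousOn
  exact .of_bound hcont.aestronglyMeasurable C
    ((ae_restrict_mem hΩ.isClosed.measurableSet).mono hC)

def monoLp (hΩ : IsCompact Ω) (α : Fin n → ℕ) : Lp ℝ 2 (μ.restrict Ω) :=
  (memLp_mono μ hΩ α).toLp (mono α)

def polyLp (hΩ : IsCompact Ω) (d : ℕ) : (↥(multiIdx n d) → ℝ) →ₗ[ℝ] Lp ℝ 2 (μ.restrict Ω) :=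
  Fintype.linearCombination ℝ fun α => monoLp μ hΩ α

theorem polyLp_ae_eq (hΩ : IsCompact Ω) {d : ℕ} (c : ↥(multiIdx n d) → ℝ) :
    polyLp μ hΩ d c =ᵐ[μ.restrict Ω] poly d c := by
  have hmono : ∀ᵐ x ∂μ.restrict Ω, ∀ α : ↥(multiIdx n d), monoLp μ hΩ α x = mono α x :=
    ae_all_iff.mpr fun α => (memLp_mono μ hΩ α).coeFn_toLp
  have hsmul : ∀ᵐ x ∂μ.restrict Ω, ∀ α : ↥(multiIdx n d),
      (c α • monoLp μ hΩ α) x = c α * monoLp μ hΩ α x :=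
    ae_all_iff.mpr fun α => Lp.coeFn_smul _ _
  filter_upwards [Lp.coeFn_finset_sum Finset.univ fun α => c α • monoLp μ hΩ α, hmono, hsmul]
    with x hsum hmono hsmul
  rw [polyLp, Fintype.linearCombination_apply, hsum, Finset.sum_apply, poly]
  simp only [hsmul, hmono]

def locMatLp (hΩ : IsCompact Ω) (d : ℕ) (f : Lp ℝ 2 (μ.restrict Ω)) :
    Matrix ↥(multiIdx n d) ↥(multiIdx n d) ℝ :=
  Matrix.of fun α β => inner ℝ f (monoLp μ hΩ (↑α + ↑β))

theorem continuous_locMatLp (hΩ : IsCompact Ω) (d : ℕ) : Continuous (locMatLp μ hΩ d) :=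
  continuous_pi fun _ => continuous_pi fun _ => continuous_id.inner continuous_const

theorem locMat_poly (hΩ : IsCompact Ω) {d : ℕ} (c : ↥(multiIdx n d) → ℝ) :
    locMat d Ω μ (poly d c) = locMatLp μ hΩ d (polyLp μ hΩ d c) := by
  ext α β
  exact (L2.real_inner_eq_integral_of_ae_eq (polyLp_ae_eq μ hΩ c)
    (memLp_mono μ hΩ _).coeFn_toLp).symm

theorem integral_sub_poly_sq (hΩ : IsCompact Ω) {d : ℕ} {u : (Fin n → ℝ) → ℝ}
    (hu : MemLp u 2 (μ.restrict Ω)) (c : ↥(multiIdx n d) → ℝ) :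
    ∫ x in Ω, (u x - poly d c x) ^ 2 ∂μ = ‖hu.toLp u - polyLp μ hΩ d c‖ ^ 2 := by
  have h : hu.toLp u - polyLp μ hΩ d c =ᵐ[μ.restrict Ω] u - poly d c :=
    (Lp.coeFn_sub _ _).trans (hu.coeFn_toLp.sub (polyLp_ae_eq μ hΩ c))
  rw [← real_inner_self_eq_norm_sq, L2.real_inner_eq_integral_of_ae_eq h h]
  simp [sq]

end PolynomialsInL2

theorem stmt8_general (n d : ℕ) (Ω : Set (Fin n → ℝ)) (hΩ : IsCompact Ω)
    (μ : Measure (Fin n → ℝ)) [IsFiniteMeasure μ]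
    (u : (Fin n → ℝ) → ℝ) (hu : MemLp u 2 (μ.restrict Ω)) :
    ∃ c : ↥(multiIdx n d) → ℝ,
      (locMat d Ω μ (poly d c)).PosSemidef ∧
      ∀ p : ↥(multiIdx n d) → ℝ, (locMat d Ω μ (poly d p)).PosSemidef →
        ∫ x in Ω, (u x - poly d c x) ^ 2 ∂μ ≤ ∫ x in Ω, (u x - poly d p x) ^ 2 ∂μ := by
  set T := polyLp μ hΩ d
  have hclosed : IsClosed (T ⁻¹' (locMatLp μ hΩ d ⁻¹' {M | M.PosSemidef})) :=
    (Matrix.isClosed_setOf_posSemidef.preimage (continuous_locMatLp μ hΩ d)).preimage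
      T.continuous_of_finiteDimensional
  have hzero : (0 : ↥(multiIdx n d) → ℝ) ∈ T ⁻¹' (locMatLp μ hΩ d ⁻¹' {M | M.PosSemidef}) := by
    show (locMatLp μ hΩ d (T 0)).PosSemidef
    convert Matrix.PosSemidef.zero
    ext
    simp [locMatLp]
  obtain ⟨c, hc, hmin⟩ :=
    T.exists_isMinOn_norm_sub_of_isClosed_preimage hclosed ⟨0, hzero⟩ (hu.toLp u)
  refine ⟨c, by rwa [locMat_poly μ hΩ], fun p hp => ?_⟩
  rw [integral_sub_poly_sq μ hΩ hu, integral_sub_poly_sq μ hΩ hu]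
  exact pow_le_pow_left₀ (norm_nonneg _) (hmin (by rwa [locMat_poly μ hΩ] at hp)) 2

/-- the minimization of `∫_Ω (u - p)² dλ` over the set `F_d` of polynomials
`p` of degree at most `d` whose localizing matrix `M_d(p z)` is positive semidefinite
attains its infimum. -/
theorem stmt8 (n d : ℕ) (Ω : Set (Fin n → ℝ)) (hΩ : IsCompact Ω)
    (hΩint : (interior Ω).Nonempty)
    (μ : Measure (Fin n → ℝ)) [IsFiniteMeasure μ] (hsupp : μ Ωᶜ = 0)
    (O : Set (Fin n → ℝ)) (hO : IsOpen O) (hOΩ : O ⊆ Ω) (hOpos : 0 < μ O)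
    (u : (Fin n → ℝ) → ℝ) (hu : MemLp u 2 (μ.restrict Ω)) :
    ∃ c : ↥(multiIdx n d) → ℝ,
      (locMat d Ω μ (poly d c)).PosSemidef ∧
      ∀ p : ↥(multiIdx n d) → ℝ, (locMat d Ω μ (poly d p)).PosSemidef →
        ∫ x in Ω, (u x - poly d c x) ^ 2 ∂μ ≤ ∫ x in Ω, (u x - poly d p x) ^ 2 ∂μ :=
  stmt8_general n d Ω hΩ μ u hu
end
end

section
/- Let n ∈ ℕ, let g₁,…,g_m be polynomials in n real variables such that Ω = {x ∈ ℝⁿ : g_j(x) ≥ 0, j = 1,…,m} is compact with nonempty interior and the quadratic module generated by g₁,…,g_m is Archimedean. Let λ be a finite Borel measure supported on Ω with λ(O) > 0 for some open set O ⊆ Ω, and let u ∈ L²(Ω,λ) with u ≥ 0 λ-almost everywhere. Set d_j = ⌈deg(g_j)/2⌉, and for each d ≥ max_j d_j let G_d be the set of polynomials p of degree at most d of the form p = σ₀ + Σ_{j=1}^m σ_j g_j with σ₀ a sum of squares of degree at most 2d and each σ_j a sum of squares of degree at most 2(d − d_j); let u*_d be a minimizer of ∫_Ω (u − p)² dλ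 over G_d. Then every u*_d is nonnegative on Ω and ‖u − u*_d‖_{L²(Ω,λ)} → 0 as d → ∞. -/
/-!
Every member of `G_d` is nonnegative on `Ω` because its Putinar representation is a sum of
products of nonnegative factors there. For the convergence, `G_d` contains the squares `P²` of
all polynomials with `2 deg P ≤ d`, so it suffices to approximate `u` in `L²` by such squares:
approximate `u` by a continuous `h ≥ 0`, then `√h` uniformly on the compact set `Ω` by a
polynomial `P` (Stone–Weierstrass); on a finite measure uniform closeness gives `L²` closeness.
The minimizing property of `u*_d` then transfers the bound from `P²` to `u*_d`.
-/

open MeasureTheory Matrix Finset Filter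

noncomputable section

/-- `f` is (the function given by) a polynomial of degree at most `k`. -/
def PolyLe (n k : ℕ) (f : (Fin n → ℝ) → ℝ) : Prop :=
  ∃ c : ↥(multiIdx n k) → ℝ, f = fun x => ∑ α : ↥(multiIdx n k), c α * mono (↑α) x

/-- `σ` is a sum of squares of polynomials of degree at most `k`
(so `σ` itself has degree at most `2k`). -/
def IsSOSLe (n k : ℕ) (σ : (Fin n → ℝ) → ℝ) : Prop :=
  ∃ (N : ℕ) (q : Fin N → (Fin n → ℝ) → ℝ),
    (∀ i, PolyLe n k (q i)) ∧ σ = fun x => ∑ i, q i x ^ 2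

/-- `σ` is a sum of squares of polynomials (of arbitrary degree). -/
def IsSOS (n : ℕ) (σ : (Fin n → ℝ) → ℝ) : Prop := ∃ k, IsSOSLe n k σ

/-- `d_j = ⌈deg(g_j)/2⌉`. -/
def ceilHalfDeg {n : ℕ} (g : MvPolynomial (Fin n) ℝ) : ℕ := (g.totalDegree + 1) / 2

/-- Membership in the quadratic module generated by `g₁,…,g_m`:
`f = σ₀ + Σ_j σ_j g_j` with all `σ_j` SOS. -/
def InQuadraticModule {n m : ℕ} (g : Fin m → MvPolynomial (Fin n) ℝ)
    (f : (Fin n → ℝ) → ℝ) : Prop :=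
  ∃ (σ₀ : (Fin n → ℝ) → ℝ) (σ : Fin m → (Fin n → ℝ) → ℝ),
    IsSOS n σ₀ ∧ (∀ j, IsSOS n (σ j)) ∧
    ∀ x, f x = σ₀ x + ∑ j, σ j x * MvPolynomial.eval x (g j)

/-- Membership in `G_d`: `p = σ₀ + Σ_j σ_j g_j` with `σ₀` an SOS of degree at most `2d`
and each `σ_j` an SOS of degree at most `2(d - d_j)`. -/
def PutinarRep {n m : ℕ} (g : Fin m → MvPolynomial (Fin n) ℝ) (d : ℕ)
    (p : (Fin n → ℝ) → ℝ) : Prop :=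
  ∃ (σ₀ : (Fin n → ℝ) → ℝ) (σ : Fin m → (Fin n → ℝ) → ℝ),
    IsSOSLe n d σ₀ ∧ (∀ j, IsSOSLe n (d - ceilHalfDeg (g j)) (σ j)) ∧
    ∀ x, p x = σ₀ x + ∑ j, σ j x * MvPolynomial.eval x (g j)

open scoped ENNReal

theorem mem_multiIdx_of_sum_le {n k : ℕ} {β : Fin n →₀ ℕ} (h : (β.sum fun _ e => e) ≤ k) :
    ⇑β ∈ multiIdx n k := by
  rw [Finsupp.sum_fintype _ _ fun _ => rfl] at h
  simp only [multiIdx, Finset.mem_filter, Fintype.mem_piFinset, Finset.mem_range]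
  exact ⟨fun i => Nat.lt_succ_of_le ((Finset.single_le_sum (fun j _ => Nat.zero_le (β j))
    (Finset.mem_univ i)).trans h), h⟩

theorem polyLe_eval {n k : ℕ} (P : MvPolynomial (Fin n) ℝ) (h : P.totalDegree ≤ k) :
    PolyLe n k fun x => MvPolynomial.eval x P := by
  let e := (Finsupp.equivFunOnFinite (α := Fin n) (M := ℕ)).symm
  refine ⟨fun α => P.coeff (e α), funext fun x => ?_⟩
  rw [Finset.sum_coe_sort (multiIdx n k) fun α => P.coeff (e α) * mono α x]
  refine (MvPolynomial.eval_eq' x P).trans ((Finset.sum_subset ?_ ?_).trans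
    (Finset.sum_map (multiIdx n k) e.toEmbedding fun β => P.coeff β * mono β x))
  · exact fun β hβ => Finset.mem_map_equiv.mpr
      (mem_multiIdx_of_sum_le ((MvPolynomial.le_totalDegree hβ).trans h))
  · exact fun β _ hβ => by rw [MvPolynomial.notMem_support_iff.mp hβ, zero_mul]

theorem PolyLe.continuous {n k : ℕ} {f : (Fin n → ℝ) → ℝ} (h : PolyLe n k f) : Continuous f := by
  obtain ⟨c, rfl⟩ := h
  unfold mono
  fun_prop

theorem IsSOSLe.nonneg {n k : ℕ} {σ : (Fin n → ℝ) → ℝ} (h : IsSOSLe n k σ) (x : Fin n → ℝ) :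
    0 ≤ σ x := by
  obtain ⟨N, q, -, rfl⟩ := h
  exact Finset.sum_nonneg fun i _ => sq_nonneg _

theorem PutinarRep.nonneg {n m d : ℕ} {g : Fin m → MvPolynomial (Fin n) ℝ}
    {p : (Fin n → ℝ) → ℝ} (hp : PutinarRep g d p) {x : Fin n → ℝ}
    (hx : ∀ j, 0 ≤ MvPolynomial.eval x (g j)) : 0 ≤ p x := by
  obtain ⟨σ₀, σ, hσ₀, hσ, hpx⟩ := hp
  rw [hpx x]
  exact add_nonneg (hσ₀.nonneg x)
    (Finset.sum_nonneg fun j _ => mul_nonneg ((hσ j).nonneg x) (hx j))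

theorem putinarRep_eval_sq {n m d : ℕ} (g : Fin m → MvPolynomial (Fin n) ℝ)
    (P : MvPolynomial (Fin n) ℝ) (hP : P.totalDegree ≤ d) :
    PutinarRep g d fun x => MvPolynomial.eval x P ^ 2 := by
  refine ⟨fun x => MvPolynomial.eval x P ^ 2, 0, ?_, fun j => ?_, fun x => by simp⟩
  · exact ⟨1, fun _ x => MvPolynomial.eval x P, fun _ => polyLe_eval P hP, by simp⟩
  · exact ⟨0, Fin.elim0, fun i => i.elim0, by funext x; simp⟩

namespace MvPolynomial

variable {σ : Type*}

def toContinuousMapOnAlgHom (K : Set (σ → ℝ)) : MvPolynomial σ ℝ →ₐ[ℝ] C(K, ℝ) :=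
  aeval fun i => ⟨fun x => (x : σ → ℝ) i, (continuous_apply i).comp continuous_subtype_val⟩

@[simp]
theorem toContinuousMapOnAlgHom_apply (K : Set (σ → ℝ)) (P : MvPolynomial σ ℝ) (x : K) :
    toContinuousMapOnAlgHom K P x = eval (x : σ → ℝ) P := by
  induction P using MvPolynomial.induction_on with
  | C a => simp [toContinuousMapOnAlgHom]
  | add p q hp hq => simp [hp, hq]
  | mul_X p i hp => simp_all [toContinuousMapOnAlgHom]

end MvPolynomial

def mvPolynomialFunctions {σ : Type*} (K : Set (σ → ℝ)) : Subalgebra ℝ C(K, ℝ) :=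
  (MvPolynomial.toContinuousMapOnAlgHom K).range

theorem mvPolynomialFunctions_separatesPoints {σ : Type*} (K : Set (σ → ℝ)) :
    (mvPolynomialFunctions K).SeparatesPoints := by
  intro x y hxy
  obtain ⟨i, hi⟩ := Function.ne_iff.mp (Subtype.coe_ne_coe.mpr hxy)
  exact ⟨_, ⟨_, ⟨MvPolynomial.X i, rfl⟩, rfl⟩, by simpa using hi⟩

theorem ContinuousMap.mem_closure_image_sq_of_separatesPoints {X : Type*} [TopologicalSpace X]
    [CompactSpace X] {A : Subalgebra ℝ C(X, ℝ)} (hA : A.SeparatesPoints) {f : C(X, ℝ)}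
    (hf : 0 ≤ f) : f ∈ closure ((· ^ 2) '' (A : Set C(X, ℝ))) := by
  let s : C(X, ℝ) := ⟨fun x => √(f x), by fun_prop⟩
  have hs : s ∈ closure (A : Set C(X, ℝ)) := by
    rw [← Subalgebra.topologicalClosure_coe,
      subalgebra_topologicalClosure_eq_top_of_separatesPoints A hA]
    trivial
  have hsf : s ^ 2 = f := by ext x; exact Real.sq_sqrt (hf x)
  exact hsf ▸ mem_closure_image (continuous_pow 2).continuousAt hs

theorem IsCompact.exists_eval_sq_near {σ : Type*} {K : Set (σ → ℝ)} (hK : IsCompact K)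
    {f : (σ → ℝ) → ℝ} (hf : ContinuousOn f K) (hf0 : ∀ x ∈ K, 0 ≤ f x) {δ : ℝ} (hδ : 0 < δ) :
    ∃ P : MvPolynomial σ ℝ, ∀ x ∈ K, |f x - MvPolynomial.eval x P ^ 2| < δ := by
  have : CompactSpace K := isCompact_iff_compactSpace.mp hK
  let F : C(K, ℝ) := ⟨K.domRestrict f, hf.domRestrict⟩
  have hF : F ∈ closure ((· ^ 2) '' (mvPolynomialFunctions K : Set C(K, ℝ))) :=
    ContinuousMap.mem_closure_image_sq_of_separatesPoints (mvPolynomialFunctions_separatesPoints K)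
      fun x => hf0 x x.2
  obtain ⟨_, ⟨_, ⟨P, rfl⟩, rfl⟩, hP⟩ := Metric.mem_closure_iff.mp hF δ hδ
  refine ⟨P, fun x hx => ?_⟩
  have := (ContinuousMap.dist_apply_le_dist ⟨x, hx⟩).trans_lt hP
  simpa [F, Real.dist_eq] using this

theorem exists_pos_forall_eLpNorm_le_of_ae_norm_le {α E : Type*} [MeasurableSpace α]
    [NormedAddCommGroup E] (ν : Measure α) [IsFiniteMeasure ν] (p : ℝ≥0∞) {ε : ℝ≥0∞}
    (hε : ε ≠ 0) :
    ∃ δ > 0, ∀ f : α → E, (∀ᵐ x ∂ν, ‖f x‖ ≤ δ) → eLpNorm f p ν ≤ ε := by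
  have hlim : Tendsto (fun δ => ν Set.univ ^ p.toReal⁻¹ * ENNReal.ofReal δ) (nhds 0)
      (nhds 0) := by
    simpa using ENNReal.Tendsto.const_mul (ENNReal.tendsto_ofReal (tendsto_id (x := nhds (0 : ℝ))))
      (Or.inr (ENNReal.rpow_ne_top_of_nonneg (by positivity) (measure_ne_top ν _)))
  obtain ⟨δ, hδε, hδ⟩ := (((hlim.mono_left nhdsWithin_le_nhds).eventually
    (ge_mem_nhds (pos_iff_ne_zero.2 hε))).and (self_mem_nhdsWithin (s := Set.Ioi (0 : ℝ)))).exists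
  exact ⟨δ, hδ, fun f hf => (eLpNorm_le_of_ae_bound hf).trans hδε⟩

theorem MeasureTheory.MemLp.exists_continuous_nonneg_eLpNorm_sub_le {α : Type*}
    [TopologicalSpace α] [NormalSpace α] [MeasurableSpace α] [BorelSpace α] {μ : Measure α}
    [μ.WeaklyRegular] {p : ℝ≥0∞} (hp : p ≠ ∞) {u : α → ℝ} (hu : MemLp u p μ)
    (hu0 : 0 ≤ᵐ[μ] u) {ε : ℝ≥0∞} (hε : ε ≠ 0) : ∃ h : α → ℝ, Continuous h ∧ 0 ≤ h ∧ eLpNorm (u - h) p μ ≤ ε := by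
  obtain ⟨g, hg, -⟩ := hu.exists_boundedContinuous_eLpNorm_sub_le hp hε
  refine ⟨fun x => max (g x) 0, by fun_prop, fun x => le_max_right _ _,
    (eLpNorm_mono_ae ?_).trans hg⟩
  filter_upwards [hu0] with x hx
  have := abs_max_sub_max_le_abs (u x) (g x) 0
  rw [max_eq_left (show 0 ≤ u x from hx)] at this
  simpa using this

theorem IsCompact.memLp_restrict_of_continuous {X E : Type*} [TopologicalSpace X] [T2Space X]
    [MeasurableSpace X] [OpensMeasurableSpace X] [NormedAddCommGroup E]
    [SecondCountableTopologyEither X E] {K : Set X} (hK : IsCompact K) (μ : Measure X)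
    [IsFiniteMeasure μ] {f : X → E} (hf : Continuous f) (p : ℝ≥0∞) :
    MemLp f p (μ.restrict K) := by
  obtain ⟨C, hC⟩ := hK.exists_bound_of_continuousOn hf.continuousOn
  exact MemLp.of_bound hf.aestronglyMeasurable C (ae_restrict_of_forall_mem hK.measurableSet hC)

theorem IsCompact.exists_eLpNorm_sub_eval_sq_le {σ : Type*} [Finite σ] {K : Set (σ → ℝ)}
    (hK : IsCompact K) (μ : Measure (σ → ℝ)) [IsFiniteMeasure μ] {p : ℝ≥0∞} (hp1 : 1 ≤ p)
    (hp : p ≠ ∞) {u : (σ → ℝ) → ℝ} (hu : MemLp u p (μ.restrict K))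
    (hu0 : 0 ≤ᵐ[μ.restrict K] u) {ε : ℝ≥0∞} (hε : ε ≠ 0) :
    ∃ P : MvPolynomial σ ℝ,
      eLpNorm (fun x => u x - MvPolynomial.eval x P ^ 2) p (μ.restrict K) ≤ ε := by
  have hε2 : ε / 2 ≠ 0 := (ENNReal.half_pos hε).ne'
  obtain ⟨h, hc, h0, huh⟩ := hu.exists_continuous_nonneg_eLpNorm_sub_le hp hu0 hε2
  obtain ⟨δ, hδ, hδε⟩ :=
    exists_pos_forall_eLpNorm_le_of_ae_norm_le (E := ℝ) (μ.restrict K) p hε2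
  obtain ⟨P, hP⟩ := hK.exists_eval_sq_near hc.continuousOn (fun x _ => h0 x) hδ
  have hhP : eLpNorm (fun x => h x - MvPolynomial.eval x P ^ 2) p (μ.restrict K) ≤ ε / 2 :=
    hδε _ (ae_restrict_of_forall_mem hK.measurableSet fun x hx => (hP x hx).le)
  have hsplit : (fun x => u x - MvPolynomial.eval x P ^ 2)
      = (u - h) + fun x => h x - MvPolynomial.eval x P ^ 2 := by
    ext x; simp
  refine ⟨P, ?_⟩
  calc eLpNorm (fun x => u x - MvPolynomial.eval x P ^ 2) p (μ.restrict K)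
      ≤ eLpNorm (u - h) p (μ.restrict K)
        + eLpNorm (fun x => h x - MvPolynomial.eval x P ^ 2) p (μ.restrict K) := by
        rw [hsplit]
        exact eLpNorm_add_le (hu.1.sub hc.aestronglyMeasurable)
          (hc.sub ((MvPolynomial.continuous_eval P).pow 2)).aestronglyMeasurable hp1
    _ ≤ ε / 2 + ε / 2 := add_le_add huh hhP
    _ = ε := ENNReal.add_halves ε

theorem eLpNorm_two_le_of_integral_sq_le {α : Type*} [MeasurableSpace α] {ν : Measure α}
    {f h : α → ℝ} (hf : MemLp f 2 ν) (hh : MemLp h 2 ν)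
    (hfh : ∫ x, f x ^ 2 ∂ν ≤ ∫ x, h x ^ 2 ∂ν) : eLpNorm f 2 ν ≤ eLpNorm h 2 ν := by
  rw [hf.eLpNorm_eq_integral_rpow_norm two_ne_zero ENNReal.ofNat_ne_top,
    hh.eLpNorm_eq_integral_rpow_norm two_ne_zero ENNReal.ofNat_ne_top]
  refine ENNReal.ofReal_le_ofReal (Real.rpow_le_rpow (by positivity) ?_ (by positivity))
  simpa [Real.rpow_two, sq_abs] using hfh

theorem stmt12_general (n m : ℕ) (g : Fin m → MvPolynomial (Fin n) ℝ)
    (Ω : Set (Fin n → ℝ)) (hΩdef : Ω = {x | ∀ j, 0 ≤ MvPolynomial.eval x (g j)})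
    (hΩ : IsCompact Ω)
    (μ : Measure (Fin n → ℝ)) [IsFiniteMeasure μ]
    (u : (Fin n → ℝ) → ℝ) (hu : MemLp u 2 (μ.restrict Ω))
    (hupos : ∀ᵐ x ∂(μ.restrict Ω), 0 ≤ u x)
    (U : ℕ → (Fin n → ℝ) → ℝ)
    (hU : ∀ d, (∀ j, ceilHalfDeg (g j) ≤ d) →
      PolyLe n d (U d) ∧ PutinarRep g d (U d) ∧
      ∀ p : (Fin n → ℝ) → ℝ, PolyLe n d p → PutinarRep g d p →
        ∫ x in Ω, (u x - U d x) ^ 2 ∂μ ≤ ∫ x in Ω, (u x - p x) ^ 2 ∂μ) :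
    (∀ d, (∀ j, ceilHalfDeg (g j) ≤ d) → ∀ x ∈ Ω, 0 ≤ U d x) ∧
    Tendsto (fun d => eLpNorm (fun x => u x - U d x) 2 (μ.restrict Ω)) atTop (nhds 0) := by
  refine ⟨fun d hd x hx => (hU d hd).2.1.nonneg (by rwa [hΩdef] at hx), ?_⟩
  refine ENNReal.tendsto_nhds_zero.mpr fun ε hε => ?_
  obtain ⟨P, hP⟩ :=
    hΩ.exists_eLpNorm_sub_eval_sq_le μ one_le_two ENNReal.ofNat_ne_top hu hupos hε.ne'
  filter_upwards [eventually_ge_atTop (2 * P.totalDegree),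
    eventually_all.mpr fun j => eventually_ge_atTop (ceilHalfDeg (g j))] with d hPd hd
  obtain ⟨hUd, -, hmin⟩ := hU d hd
  have hPsq : PolyLe n d fun x => MvPolynomial.eval x P ^ 2 := by
    simpa using polyLe_eval (P ^ 2) ((MvPolynomial.totalDegree_pow P 2).trans (by omega))
  have hmemLp {f : (Fin n → ℝ) → ℝ} (hf : Continuous f) :
      MemLp (fun x => u x - f x) 2 (μ.restrict Ω) :=
    hu.sub (hΩ.memLp_restrict_of_continuous μ hf 2)
  calc eLpNorm (fun x => u x - U d x) 2 (μ.restrict Ω)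
      ≤ eLpNorm (fun x => u x - MvPolynomial.eval x P ^ 2) 2 (μ.restrict Ω) :=
        eLpNorm_two_le_of_integral_sq_le (hmemLp hUd.continuous)
          (hmemLp ((MvPolynomial.continuous_eval P).pow 2))
          (hmin _ hPsq (putinarRep_eval_sq g P (by omega)))
    _ ≤ ε := hP

/-- for `Ω = {x : g_j(x) ≥ 0}` compact with nonempty interior and
Archimedean quadratic module, if for each `d ≥ max_j d_j` the polynomial `U d` of degree
at most `d` minimizes `∫_Ω (u - p)² dλ` over the set `G_d` of polynomials of degree at
most `d` with a Putinar representation, then every such `U d` is nonnegative on `Ω` and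
`‖u - U d‖_{L²(Ω,λ)} → 0` as `d → ∞`. -/
theorem stmt12 (n m : ℕ) (g : Fin m → MvPolynomial (Fin n) ℝ)
    (Ω : Set (Fin n → ℝ)) (hΩdef : Ω = {x | ∀ j, 0 ≤ MvPolynomial.eval x (g j)})
    (hΩ : IsCompact Ω) (hΩint : (interior Ω).Nonempty)
    (harch : ∃ N : ℝ, 0 < N ∧
      InQuadraticModule g (fun x => N - ∑ i, x i ^ 2))
    (μ : Measure (Fin n → ℝ)) [IsFiniteMeasure μ] (hsupp : μ Ωᶜ = 0)
    (O : Set (Fin n → ℝ)) (hO : IsOpen O) (hOΩ : O ⊆ Ω) (hOpos : 0 < μ O)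
    (u : (Fin n → ℝ) → ℝ) (hu : MemLp u 2 (μ.restrict Ω))
    (hupos : ∀ᵐ x ∂(μ.restrict Ω), 0 ≤ u x)
    (U : ℕ → (Fin n → ℝ) → ℝ)
    (hU : ∀ d, (∀ j, ceilHalfDeg (g j) ≤ d) →
      PolyLe n d (U d) ∧ PutinarRep g d (U d) ∧
      ∀ p : (Fin n → ℝ) → ℝ, PolyLe n d p → PutinarRep g d p →
        ∫ x in Ω, (u x - U d x) ^ 2 ∂μ ≤ ∫ x in Ω, (u x - p x) ^ 2 ∂μ) :
    (∀ d, (∀ j, ceilHalfDeg (g j) ≤ d) → ∀ x ∈ Ω, 0 ≤ U d x) ∧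
    Tendsto (fun d => eLpNorm (fun x => u x - U d x) 2 (μ.restrict Ω)) atTop (nhds 0) :=
  stmt12_general n m g Ω hΩdef hΩ μ u hu hupos U hU
end
end
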